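/- arXiv:2212.08154 — 2 statements merged into one kernel-verified Lean document; each statement's English description precedes it below -/
import Mathlib

section
/- Let H and V be finite-dimensional real inner product spaces with V ≠ 0 and let A : H × H → V be an ℝ-bilinear alternating fat map. Then dim H is even. -/
/-!
For any nonzero `v ∈ V`, the real bilinear form `(X, Y) ↦ ⟪v, A X Y⟫` on `H` is alternating
because `A` is, and nondegenerate because `⟪v, A X Y⟫ = ⟪A_X^* v, Y⟫` and `A_X^* v ≠ 0` for
`X ≠ 0`. The Gram matrix `M` of a nondegenerate alternating form satisfies `Mᵀ = -M` and
`det M ≠ 0`, while `det M = det Mᵀ = (-1)^{dim H} det M`; hence `dim H` is even.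
-/

/-- The pointwise fatness condition: for every nonzero horizontal vector `X`,
the adjoint `A_X^* : V → H` of `A_X := A X : H → V` is injective. -/
def IsFat {H V : Type*} [NormedAddCommGroup H] [InnerProductSpace ℝ H]
    [FiniteDimensional ℝ H] [NormedAddCommGroup V] [InnerProductSpace ℝ V]
    [FiniteDimensional ℝ V] (A : H →ₗ[ℝ] H →ₗ[ℝ] V) : Prop :=
  ∀ X : H, X ≠ 0 → Function.Injective (LinearMap.adjoint (A X))

open scoped Matrix

theorem Matrix.det_eq_zero_of_transpose_eq_neg {n R : Type*} [Fintype n] [DecidableEq n]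
    [CommRing R] [IsAddTorsionFree R] {M : Matrix n n R} (hM : Mᵀ = -M)
    (hn : Odd (Fintype.card n)) : M.det = 0 :=
  self_eq_neg.mp <| calc
    M.det = Mᵀ.det := M.det_transpose.symm
    _ = -M.det := by rw [hM, det_neg, hn.neg_one_pow, neg_one_mul]

theorem LinearMap.IsAlt.compr₂ {R M N P : Type*} [CommSemiring R] [AddCommMonoid M]
    [AddCommMonoid N] [AddCommMonoid P] [Module R M] [Module R N] [Module R P]
    {B : M →ₗ[R] M →ₗ[R] N} (hB : B.IsAlt) (f : N →ₗ[R] P) : (B.compr₂ f).IsAlt := fun x => by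
  rw [compr₂_apply, hB.self_eq_zero, map_zero]

namespace LinearMap.BilinForm

variable {R M : Type*} [CommRing R] [AddCommGroup M] [Module R M]

theorem transpose_toMatrix_of_isAlt {n : Type*} [Fintype n] [DecidableEq n]
    (b : Module.Basis n R M) {B : LinearMap.BilinForm R M} (hB : B.IsAlt) :
    (toMatrix b B)ᵀ = -toMatrix b B :=
  Matrix.ext fun _ _ => (LinearMap.IsAlt.neg hB _ _).symm

theorem even_finrank_of_isAlt [IsDomain R] [IsAddTorsionFree R] [Module.Free R M]
    [Module.Finite R M] {B : LinearMap.BilinForm R M} (hAlt : B.IsAlt) (hB : B.SeparatingLeft) :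
    Even (Module.finrank R M) := by
  let b := Module.finBasis R M
  have hdet : (toMatrix b B).det ≠ 0 :=
    (nondegenerate_iff_det_ne_zero b).mp (hAlt.isRefl.nondegenerate_iff_separatingLeft.mpr hB)
  by_contra hodd
  exact hdet <| Matrix.det_eq_zero_of_transpose_eq_neg (transpose_toMatrix_of_isAlt b hAlt)
    (by rwa [Fintype.card_fin, ← Nat.not_even_iff_odd])

end LinearMap.BilinForm

theorem IsFat.separatingLeft_compr₂_innerₗ {H V : Type*} [NormedAddCommGroup H]
    [InnerProductSpace ℝ H] [FiniteDimensional ℝ H] [NormedAddCommGroup V]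
    [InnerProductSpace ℝ V] [FiniteDimensional ℝ V] {A : H →ₗ[ℝ] H →ₗ[ℝ] V} (hFat : IsFat A)
    {v : V} (hv : v ≠ 0) : (A.compr₂ (innerₗ V v)).SeparatingLeft := by
  intro X hX
  by_contra hX0
  have hadj : LinearMap.adjoint (A X) v = 0 := by
    have h := hX (LinearMap.adjoint (A X) v)
    rw [LinearMap.compr₂_apply, innerₗ_apply_apply, ← LinearMap.adjoint_inner_left] at h
    exact inner_self_eq_zero.mp h
  exact hv <| hFat X hX0 (hadj.trans (map_zero _).symm)

/-- If `A : H × H → V` is an alternating fat bilinear map with `V ≠ 0`, then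
`dim H` is even. -/
theorem fat_dim_even {H V : Type*}
    [NormedAddCommGroup H] [InnerProductSpace ℝ H] [FiniteDimensional ℝ H]
    [NormedAddCommGroup V] [InnerProductSpace ℝ V] [FiniteDimensional ℝ V]
    [Nontrivial V]
    (A : H →ₗ[ℝ] H →ₗ[ℝ] V) (hAlt : ∀ X : H, A X X = 0) (hFat : IsFat A) :
    Even (Module.finrank ℝ H) := by
  obtain ⟨v, hv⟩ := exists_ne (0 : V)
  exact LinearMap.BilinForm.even_finrank_of_isAlt (LinearMap.IsAlt.compr₂ hAlt (innerₗ V v))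
    (hFat.separatingLeft_compr₂_innerₗ hv)
end

section
/- Let H and V be finite-dimensional real inner product spaces and let A : H × H → V be an ℝ-bilinear alternating fat map with dim V ≥ 2. Then dim H is divisible by 4. -/
/-!
Pick independent `v, w ∈ V` and put `β = ⟪v, A(·,·)⟫`, `γ = ⟪w, A(·,·)⟫`. These are alternating,
and fatness says exactly that every `γ - s β = ⟪w - s v, A(·,·)⟫` is nondegenerate. Writing
`γ = β (T ·) ·`, the endomorphism `T` is `β`-self-adjoint and has no real eigenvalue. After
complexifying, self-adjointness makes each generalized eigenspace of `T` a Fitting summand on which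
`β` stays nondegenerate, so it is even-dimensional: every root of the characteristic polynomial
of `T` has even multiplicity. The roots are non-real and come in conjugate pairs, so the degree
`dim H` is twice an even number.
-/

open Module Polynomial
open scoped Matrix

theorem eq_zero_of_eq_neg {R : Type*} [Ring R] [NoZeroDivisors R] [NeZero (2 : R)] {a : R}
    (h : a = -a) : a = 0 := by
  rw [eq_neg_iff_add_eq_zero, ← two_mul] at h
  exact (mul_eq_zero.mp h).resolve_left two_ne_zero

theorem Multiset.even_card_of_forall_even_count {α : Type*} [DecidableEq α] {s : Multiset α}
    (h : ∀ a, Even (s.count a)) : Even (Multiset.card s) := by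
  rw [← Multiset.toFinset_sum_count_eq]
  exact Finset.even_sum _ fun a _ => h a

theorem LinearMap.IsAdjointPair.pow {R M : Type*} [CommSemiring R] [AddCommMonoid M] [Module R M]
    {B : LinearMap.BilinForm R M} {f : Module.End R M} (hf : IsAdjointPair B B f f) (n : ℕ) :
    IsAdjointPair B B ⇑(f ^ n) ⇑(f ^ n) := by
  induction n with
  | zero => exact isAdjointPair_one
  | succ n ih =>
    have := ih.mul hf
    rwa [← pow_succ, ← pow_succ'] at this

theorem Polynomial.four_dvd_natDegree_of_even_rootMultiplicity {P : ℝ[X]}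
    (hP : ∀ r : ℝ, ¬ P.IsRoot r)
    (heven : ∀ μ : ℂ, Even ((P.map (algebraMap ℝ ℂ)).rootMultiplicity μ)) : 4 ∣ P.natDegree := by
  classical
  set Q := P.map (algebraMap ℝ ℂ)
  have hconj : Q.roots.map (starRingEnd ℂ) = Q.roots := by
    have hQ : Q.map (starRingEnd ℂ) = Q := by
      rw [Polynomial.map_map]
      congr 1
      ext r
      simp
    rw [← (IsAlgClosed.splits Q).roots_map, hQ]
  have hnonreal : ∀ z ∈ Q.roots, z.im ≠ 0 := by
    intro z hz him
    rw [show z = algebraMap ℝ ℂ z.re from Complex.ext (by simp) (by simp [him]), mem_roots',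
      isRoot_map_iff (algebraMap ℝ ℂ).injective] at hz
    exact hP _ hz.2
  set U := Q.roots.filter (fun z => 0 < z.im)
  have hlower : Q.roots.filter (fun z => ¬ 0 < z.im) = U.map (starRingEnd ℂ) := by
    conv_lhs => rw [← hconj]
    rw [Multiset.filter_map]
    congr 1
    refine Multiset.filter_congr fun z hz => ?_
    rw [Function.comp_apply, Complex.conj_im, neg_pos, not_lt]
    exact ⟨fun h => h.lt_of_ne (hnonreal z hz).symm, le_of_lt⟩
  have hU : Even (Multiset.card U) := Multiset.even_card_of_forall_even_count fun z => by
    rw [Multiset.count_filter]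
    split_ifs
    · rw [count_roots]
      exact heven z
    · exact ⟨0, rfl⟩
  have hdeg : P.natDegree = 2 * Multiset.card U := by
    rw [← natDegree_map (algebraMap ℝ ℂ), (IsAlgClosed.splits Q).natDegree_eq_card_roots,
      ← Multiset.filter_add_not (fun z => 0 < z.im) Q.roots, Multiset.card_add, hlower,
      Multiset.card_map, two_mul]
  obtain ⟨k, hk⟩ := hU
  exact ⟨k, by omega⟩

namespace LinearMap.BilinForm

section Field

variable {K M : Type*} [Field K] [AddCommGroup M] [Module K M] [FiniteDimensional K M]
  {β : LinearMap.BilinForm K M}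

theorem Nondegenerate.even_finrank [NeZero (2 : K)] (hβ : β.Nondegenerate) (hβalt : β.IsAlt) :
    Even (finrank K M) := by
  set b := finBasis K M
  set J := LinearMap.BilinForm.toMatrix b β
  have hJ : Jᵀ = -J := by
    ext i j
    simp [J, LinearMap.BilinForm.toMatrix_apply, hβalt.neg_eq]
  have hdet : J.det ≠ 0 := (nondegenerate_iff_det_ne_zero b).mp hβ
  by_contra hodd
  refine hdet (eq_zero_of_eq_neg ?_)
  conv_lhs => rw [← Matrix.det_transpose, hJ, Matrix.det_neg, Fintype.card_fin,
    (Nat.not_even_iff_odd.mp hodd).neg_one_pow, neg_one_mul]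

theorem nondegenerate_restrict_maxGenEigenspace {T : Module.End K M} (hβ : β.Nondegenerate)
    (hT : IsAdjointPair β β T T) (μ : K) :
    (β.restrict (T.maxGenEigenspace μ)).Nondegenerate := by
  set S := T - μ • 1
  have hS : IsAdjointPair β β S S := hT.sub (isAdjointPair_one.smul μ)
  have hmax : T.maxGenEigenspace μ = ⨆ n, ker (S ^ n) := by
    simp [S, ← Module.End.iSup_genEigenspace_eq, Module.End.genEigenspace_nat]
  -- Fitting: `M = ker Sᵏ ⊕ range Sᵏ` for large `k`, and `range Sᵏ` is `β`-orthogonal to `ker Sᵏ`.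
  have hfitting := LinearMap.isCompl_iSup_ker_pow_iInf_range_pow S
  rw [← hmax] at hfitting
  refine Nondegenerate.ofSeparatingLeft fun x hx => Subtype.ext (hβ.1 x fun z => ?_)
  obtain ⟨y, hy, u, hu, rfl⟩ :=
    Submodule.mem_sup.mp (hfitting.sup_eq_top ▸ Submodule.mem_top (x := z))
  obtain ⟨k, hk⟩ := (Module.End.mem_maxGenEigenspace _ _ _).mp x.2
  obtain ⟨w, rfl⟩ := Submodule.mem_iInf _ |>.mp hu k
  rw [map_add, ← hS.pow k x w, hk, map_zero, LinearMap.zero_apply, add_zero]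
  exact hx ⟨y, hy⟩

theorem even_rootMultiplicity_charpoly [NeZero (2 : K)] {T : Module.End K M}
    (hβ : β.Nondegenerate) (hβalt : β.IsAlt) (hT : IsAdjointPair β β T T) (μ : K) :
    Even (T.charpoly.rootMultiplicity μ) := by
  rw [← LinearMap.finrank_maxGenEigenspace_eq]
  exact (nondegenerate_restrict_maxGenEigenspace hβ hT μ).even_finrank fun x => hβalt x

theorem even_rootMultiplicity_charpoly_map {L : Type*} [Field L] [Algebra K L] [NeZero (2 : L)]
    {T : Module.End K M} (hβ : β.Nondegenerate) (hβalt : β.IsAlt) (hT : IsAdjointPair β β T T)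
    (μ : L) : Even ((T.charpoly.map (algebraMap K L)).rootMultiplicity μ) := by
  set b := finBasis K M
  set f := algebraMap K L
  set J := LinearMap.toMatrix₂ b b β
  set A := LinearMap.toMatrix b b T
  have hJ : (J.map f)ᵀ = -J.map f := by
    ext i j
    simp only [Matrix.transpose_apply, Matrix.map_apply, Matrix.neg_apply, J,
      LinearMap.toMatrix₂_apply]
    rw [← map_neg, hβalt.neg_eq]
  have hA : Matrix.IsAdjointPair (J.map f) (J.map f) (A.map f) (A.map f) := by
    have hA₀ : Matrix.IsAdjointPair J J A A := by
      rwa [← isAdjointPair_toLinearMap₂ b b, Matrix.toLinearMap₂_toMatrix₂, Matrix.toLin_toMatrix]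
    rw [Matrix.IsAdjointPair, ← Matrix.transpose_map, ← Matrix.map_mul, ← Matrix.map_mul, hA₀]
  have hdet : (J.map f).det ≠ 0 := by
    rw [← show f J.det = (J.map f).det from f.map_det J, map_ne_zero_iff f f.injective,
      ← Matrix.nondegenerate_iff_det_ne_zero]
    exact (LinearMap.nondegenerate_toMatrix₂_iff b b).mpr hβ
  have halt : (Matrix.toLinearMap₂' L (J.map f)).IsAlt := fun x => by
    refine eq_zero_of_eq_neg ?_
    conv_lhs => rw [Matrix.toLinearMap₂'_apply', Matrix.dotProduct_mulVec,
      ← Matrix.mulVec_transpose, hJ, Matrix.neg_mulVec, neg_dotProduct, dotProduct_comm]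
    rw [Matrix.toLinearMap₂'_apply']
  rw [← T.charpoly_toMatrix b, ← Matrix.charpoly_map, ← Matrix.charpoly_toLin']
  exact even_rootMultiplicity_charpoly
    (LinearMap.nondegenerate_toLinearMap₂'_iff_det_ne_zero.mpr hdet) halt
    ((isAdjointPair_toLinearMap₂' _ _ _ _).mpr hA) μ

end Field

section Real

variable {E : Type*} [AddCommGroup E] [Module ℝ E] [FiniteDimensional ℝ E]
  {β : LinearMap.BilinForm ℝ E}

theorem four_dvd_finrank_of_isAdjointPair {T : Module.End ℝ E}
    (hβ : β.Nondegenerate) (hβalt : β.IsAlt) (hT : IsAdjointPair β β T T)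
    (hTreal : ∀ r : ℝ, ¬ T.HasEigenvalue r) : 4 ∣ finrank ℝ E := by
  rw [← T.charpoly_natDegree]
  exact four_dvd_natDegree_of_even_rootMultiplicity
    (fun r hr => hTreal r ((T.hasEigenvalue_iff_isRoot_charpoly r).mpr hr))
    (even_rootMultiplicity_charpoly_map hβ hβalt hT)

theorem four_dvd_finrank_of_nondegenerate_pencil {γ : LinearMap.BilinForm ℝ E} (hβalt : β.IsAlt)
    (hγalt : γ.IsAlt) (hβ : β.Nondegenerate) (hpencil : ∀ s : ℝ, (γ - s • β).Nondegenerate) :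
    4 ∣ finrank ℝ E := by
  set T : Module.End ℝ E := (β.toDual hβ).symm.toLinearMap ∘ₗ γ
  have hβT : ∀ x y, β (T x) y = γ x y := fun x y => by
    rw [← toDual_def hβ]
    simp [T]
  refine four_dvd_finrank_of_isAdjointPair (T := T) hβ hβalt (fun x y => ?_) fun r hr => ?_
  · rw [hβT, ← hγalt.neg_eq, ← hβT, hβalt.neg_eq]
  · obtain ⟨x, hx, hx0⟩ := hr.exists_hasEigenvector
    refine hx0 ((hpencil r).1 x fun y => ?_)
    rw [Module.End.mem_eigenspace_iff] at hx
    simp [← hβT, hx]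

end Real

end LinearMap.BilinForm

theorem IsFat.nondegenerate_compr₂_innerₗ {H V : Type*} [NormedAddCommGroup H]
    [InnerProductSpace ℝ H] [FiniteDimensional ℝ H] [NormedAddCommGroup V] [InnerProductSpace ℝ V]
    [FiniteDimensional ℝ V] {A : H →ₗ[ℝ] H →ₗ[ℝ] V} (hFat : IsFat A) {u : V} (hu : u ≠ 0) :
    (A.compr₂ (innerₗ V u)).Nondegenerate := by
  refine LinearMap.BilinForm.Nondegenerate.ofSeparatingLeft fun X hX => ?_
  by_contra hX0
  refine hu (hFat X hX0 ?_)
  rw [map_zero]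
  refine ext_inner_right ℝ fun Y => ?_
  rw [LinearMap.adjoint_inner_left, inner_zero_left]
  simpa using hX Y

/-- If `A : H × H → V` is an alternating fat bilinear map with `dim V ≥ 2`,
then `dim H` is divisible by `4`. -/
theorem fat_dim_div_four {H V : Type*}
    [NormedAddCommGroup H] [InnerProductSpace ℝ H] [FiniteDimensional ℝ H]
    [NormedAddCommGroup V] [InnerProductSpace ℝ V] [FiniteDimensional ℝ V]
    (A : H →ₗ[ℝ] H →ₗ[ℝ] V) (hAlt : ∀ X : H, A X X = 0) (hFat : IsFat A)
    (hdim : 2 ≤ Module.finrank ℝ V) :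
    4 ∣ Module.finrank ℝ H := by
  have : Nontrivial V := Module.nontrivial_of_finrank_pos (R := ℝ) (by omega)
  obtain ⟨v, hv⟩ := exists_ne (0 : V)
  obtain ⟨w, hvw⟩ := exists_linearIndependent_pair_of_one_lt_finrank hdim hv
  have hAltForm : ∀ u : V, (A.compr₂ (innerₗ V u)).IsAlt := fun u X => by simp [hAlt]
  refine LinearMap.BilinForm.four_dvd_finrank_of_nondegenerate_pencil (hAltForm v) (hAltForm w)
    (hFat.nondegenerate_compr₂_innerₗ hv) fun s => ?_
  have hws : w - s • v ≠ 0 := fun h => by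
    simpa using (LinearIndependent.pair_iff.mp hvw (-s) 1 (by rw [← h]; module)).2
  convert hFat.nondegenerate_compr₂_innerₗ hws using 1
  ext X Y
  simp
end
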